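/- Let f : ℝ → ℝ be smooth with f'(z) > 0 for all z, fix an integer n ≥ 1, and let Ψ be the operator (Ψ w) = (1/f') w' − ((n−1)/2) (1/f')' w. Then for every integer j with 0 ≤ j ≤ n−1, the function w_j(z) = f'(z)^{−(n−1)/2} f(z)^{j} satisfies Ψ^n [ w_j ] = 0. In other words, the image of the canonical equation y^{(n)} = 0 under the change of variables x = f(z), y = f'(z)^{(n−1)/2} w is an n-th order linear iterative equation in normal form, whose solution space is spanned by the functions f'^{−(n−1)/2} f^{j}, j = 0, …, n−1. -/

import Mathlib

open Real

/-- The first-order linear differential operator `Ψ[w] = r w' + s w`. -/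
noncomputable def Psi (r s : ℝ → ℝ) (w : ℝ → ℝ) : ℝ → ℝ :=
  fun z => r z * deriv w z + s z * w z

theorem psi_const_mul (r s : ℝ → ℝ) (c : ℝ) (w : ℝ → ℝ) :
    Psi r s (fun t => c * w t) = fun z => c * Psi r s w z := by
  funext z
  simp only [Psi, deriv_const_mul_field]
  ring

theorem psi_iter_const_mul (r s : ℝ → ℝ) (c : ℝ) (w : ℝ → ℝ) (k : ℕ) :
    (Psi r s)^[k] (fun t => c * w t) = fun z => c * (Psi r s)^[k] w z := by
  induction k generalizing w with
  | zero => rfl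
  | succ k ih =>
    rw [Function.iterate_succ_apply, psi_const_mul, ih]
    rw [Function.iterate_succ_apply]

theorem psi_zero (r s : ℝ → ℝ) : Psi r s (fun _ => 0) = fun _ => 0 := by
  funext z; simp [Psi]

theorem psi_iter_zero (r s : ℝ → ℝ) (k : ℕ) :
    (Psi r s)^[k] (fun _ => (0:ℝ)) = fun _ => 0 := by
  induction k with
  | zero => rfl
  | succ k ih => rw [Function.iterate_succ_apply, psi_zero, ih]

theorem psi_step (f : ℝ → ℝ) (hf : ContDiff ℝ (⊤ : ℕ∞) f) (hf' : ∀ z, 0 < deriv f z)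
    (α : ℝ) (j : ℕ) :
    Psi (fun t => 1 / deriv f t) (fun t => α * deriv (fun x => 1 / deriv f x) t)
      (fun t => deriv f t ^ α * f t ^ j)
    = fun z => (j : ℝ) * (deriv f z ^ α * f z ^ (j - 1)) := by
  funext z
  have hfd : Differentiable ℝ f := hf.differentiable (by simp)
  have hg : Differentiable ℝ (deriv f) :=
    ((contDiff_infty_iff_deriv.mp (hf.of_le (by simp))).2).differentiable (by simp)
  have hgz : deriv f z ≠ 0 := (hf' z).ne'
  have h1 : HasDerivAt (fun t => deriv f t ^ α * f t ^ j)
      ((deriv (deriv f) z * α * deriv f z ^ (α - 1)) * f z ^ j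
        + deriv f z ^ α * ((j : ℝ) * f z ^ (j - 1) * deriv f z)) z :=
    ((hg z).hasDerivAt.rpow_const (Or.inl hgz)).mul ((hfd z).hasDerivAt.pow j)
  have h2 : deriv (fun x => 1 / deriv f x) z = -(deriv (deriv f) z) / deriv f z ^ 2 := by
    have h := ((hg z).hasDerivAt.inv hgz)
    have h' : HasDerivAt (fun x => 1 / deriv f x) (-(deriv (deriv f) z) / deriv f z ^ 2) z := by
      rw [show (fun x => 1 / deriv f x) = (deriv f)⁻¹ from by funext x; simp]; exact h
    exact h'.deriv
  have hpow : deriv f z ^ (α - 1) = deriv f z ^ α / deriv f z := by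
    rw [Real.rpow_sub (hf' z), Real.rpow_one]
  simp only [Psi, h1.deriv, h2, hpow]
  field_simp
  ring

theorem psi_iter_kill (f : ℝ → ℝ) (hf : ContDiff ℝ (⊤ : ℕ∞) f) (hf' : ∀ z, 0 < deriv f z)
    (α : ℝ) : ∀ j : ℕ,
    (Psi (fun t => 1 / deriv f t)
        (fun t => α * deriv (fun x => 1 / deriv f x) t))^[j + 1]
      (fun t => deriv f t ^ α * f t ^ j) = fun _ => 0 := by
  intro j
  induction j with
  | zero =>
    rw [Function.iterate_one, psi_step f hf hf' α 0]
    funext z; simp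
  | succ j ih =>
    rw [Function.iterate_succ_apply, psi_step f hf hf' α (j + 1)]
    have : (fun z => ((j + 1 : ℕ) : ℝ) * (deriv f z ^ α * f z ^ (j + 1 - 1)))
        = fun z => ((j + 1 : ℕ) : ℝ) * ((fun t => deriv f t ^ α * f t ^ j) z) := by
      funext z; simp
    rw [this, psi_iter_const_mul, ih]
    funext z; simp

/-- For `f` smooth with `f' > 0` and `Ψ` the operator with source parameters
`r = 1/f'` and `s = -((n-1)/2)(1/f')'`, each function
`w_j = f'^{-(n-1)/2} f^j` (`0 ≤ j ≤ n-1`) satisfies `Ψ^n[w_j] = 0`: the image of the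
canonical equation `y^{(n)} = 0` under `x = f(z)`, `y = f'^{(n-1)/2} w` is an
`n`-th order iterative equation in normal form with solutions `f'^{-(n-1)/2} f^j`. -/
theorem stmt10 (f : ℝ → ℝ) (hf : ContDiff ℝ (⊤ : ℕ∞) f) (hf' : ∀ z, 0 < deriv f z)
    (n : ℕ) (hn : 1 ≤ n) :
    ∀ j : ℕ, j ≤ n - 1 → ∀ z : ℝ,
      (Psi (fun t => 1 / deriv f t)
          (fun t => -(((n : ℝ) - 1) / 2) * deriv (fun x => 1 / deriv f x) t))^[n]
        (fun t => deriv f t ^ (-(((n : ℝ) - 1) / 2)) * f t ^ j) z = 0 := by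
  intro j hj z
  set α : ℝ := -(((n : ℝ) - 1) / 2) with hα
  have hjn : j + 1 ≤ n := by omega
  have hsplit : n = (n - (j + 1)) + (j + 1) := by omega
  rw [hsplit, Function.iterate_add_apply, psi_iter_kill f hf hf' α j, psi_iter_zero]
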